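/- The Young function Φ*(x) = |x|·arcsinh|x| − √(1+x²) + 1 satisfies: for every a > 1 and every real x, Φ*(a·x) ≤ a²·Φ*(x). -/

import Mathlib

/-- Young conjugate of `cosh y - 1`. -/
noncomputable def PhiStarB (x : ℝ) : ℝ := |x| * Real.arsinh |x| - Real.sqrt (1 + x ^ 2) + 1

/-!
On `[0, ∞)`, `Φ*` is the primitive of `arsinh` vanishing at `0`, and `Φ*` is even. Since `arsinh`
is concave on `[0, ∞)` with `arsinh 0 = 0`, it satisfies `arsinh (a t) ≤ a arsinh t` for `a ≥ 1`;
the substitution `t ↦ a t` in `∫₀^{a|x|} arsinh` then produces the factor `a²`.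
-/

open Real Set intervalIntegral

lemma ConcaveOn.map_mul_le_mul_map {f : ℝ → ℝ} (hf : ConcaveOn ℝ (Ici 0) f) (hf₀ : 0 ≤ f 0)
    {a t : ℝ} (ha : 1 ≤ a) (ht : 0 ≤ t) : f (a * t) ≤ a * f t := by
  have ha₀ : 0 < a := zero_lt_one.trans_le ha
  -- `t = a⁻¹ • (a * t) + (1 - a⁻¹) • 0`
  have hconc := hf.2 (mem_Ici.mpr (mul_nonneg ha₀.le ht)) (mem_Ici.mpr le_rfl)
    (inv_nonneg.mpr ha₀.le) (sub_nonneg.mpr (inv_le_one_of_one_le₀ ha)) (add_sub_cancel _ _)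
  simp only [smul_eq_mul, mul_zero, add_zero, inv_mul_cancel_left₀ ha₀.ne'] at hconc
  have h₀ : 0 ≤ (1 - a⁻¹) * f 0 := mul_nonneg (sub_nonneg.mpr (inv_le_one_of_one_le₀ ha)) hf₀
  rw [← inv_mul_le_iff₀ ha₀]
  linarith

lemma Real.concaveOn_arsinh : ConcaveOn ℝ (Ici 0) arsinh := by
  have hderiv : deriv arsinh = fun x => (√(1 + x ^ 2))⁻¹ :=
    funext fun x => (hasDerivAt_arsinh x).deriv
  refine AntitoneOn.concaveOn_of_deriv (convex_Ici 0) continuous_arsinh.continuousOn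
    differentiable_arsinh.differentiableOn ?_
  rw [hderiv, interior_Ici]
  intro x hx y _ hxy
  have hx : 0 < x := hx
  exact inv_anti₀ (by positivity) (sqrt_le_sqrt (by nlinarith))

lemma integral_zero_mul_le_sq_mul_integral {f : ℝ → ℝ} (hf : Continuous f) {a y : ℝ} (ha : 0 ≤ a)
    (hy : 0 ≤ y) (hfa : ∀ t ∈ Icc 0 y, f (a * t) ≤ a * f t) :
    ∫ t in 0..a * y, f t ≤ a ^ 2 * ∫ t in 0..y, f t := by
  calc ∫ t in 0..a * y, f t = a * ∫ t in 0..y, f (a * t) := by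
        simpa only [mul_zero, smul_eq_mul] using
          (smul_integral_comp_mul_left f a (a := 0) (b := y)).symm
    _ ≤ a * ∫ t in 0..y, a * f t := by
        gcongr
        exact integral_mono_on hy ((hf.comp (continuous_const_mul a)).intervalIntegrable 0 y)
          ((continuous_const_mul a |>.comp hf).intervalIntegrable 0 y) hfa
    _ = a ^ 2 * ∫ t in 0..y, f t := by rw [integral_const_mul]; ring

lemma integral_arsinh (x : ℝ) :
    ∫ t in 0..x, arsinh t = x * arsinh x - √(1 + x ^ 2) + 1 := by
  have hderiv (t : ℝ) : HasDerivAt (fun t => t * arsinh t - √(1 + t ^ 2)) (arsinh t) t := by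
    have hsq : HasDerivAt (fun t => 1 + t ^ 2) (2 * t) t := by
      simpa using (hasDerivAt_pow 2 t).const_add 1
    refine (((hasDerivAt_id' t).mul (hasDerivAt_arsinh t)).sub
      (hsq.sqrt (by positivity))).congr_deriv ?_
    field_simp
    ring
  rw [integral_eq_sub_of_hasDerivAt (fun t _ => hderiv t) (continuous_arsinh.intervalIntegrable 0 x)]
  simp

lemma phiStarB_abs (x : ℝ) : PhiStarB |x| = PhiStarB x := by
  simp only [PhiStarB, abs_abs, sq_abs]

lemma phiStarB_eq_integral {x : ℝ} (hx : 0 ≤ x) : PhiStarB x = ∫ t in 0..x, arsinh t := by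
  rw [integral_arsinh, PhiStarB, abs_of_nonneg hx]

theorem phiStarB_delta_two (a : ℝ) (ha : 1 < a) (x : ℝ) :
    PhiStarB (a * x) ≤ a ^ 2 * PhiStarB x := by
  have ha₀ : 0 < a := zero_lt_one.trans ha
  rw [← phiStarB_abs (a * x), ← phiStarB_abs x, abs_mul, abs_of_pos ha₀,
    phiStarB_eq_integral (by positivity), phiStarB_eq_integral (abs_nonneg x)]
  exact integral_zero_mul_le_sq_mul_integral continuous_arsinh ha₀.le (abs_nonneg x)
    fun t ht => concaveOn_arsinh.map_mul_le_mul_map arsinh_zero.ge ha.le ht.1
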